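/- arXiv:math/0610286 — 2 statements merged into one kernel-verified Lean document; each statement's English description precedes it below -/
import Mathlib

section
/- For every prime p, v_{p^2+1} ≡ -1 (mod p) and v_{p^2+2} ≡ -1 (mod p). -/
/-!
Modulo `p` the `j`-th factor `(2m - 3 - j) + j x` equals `c + j (x - 1)` with `c = 2m - 3`, which
depends on `j` only modulo `p`. For `m = p² + 1` (`c = -1`, `2p²` factors) and `m = p² + 2`
(`c = 1`, `2p² + 2` factors, the last two multiplying to `x`) the product is therefore, up to that
factor `x`, the `2p`-th power of `∏_{a ∈ 𝔽_p} (c + a (x - 1)) = c (1 - (x - 1)^(p-1)) = c (1 - S)`,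
where `S = 1 + x + ⋯ + x^(p-1)`. As `c² = 1`, Frobenius turns this power into `g(x^p)` with
`g = (1 - S)²`, and the coefficient of `x^(p²)` in `(1 - x) g(x^p)` is the coefficient of `x^p`
in `g`, namely `p - 1 ≡ -1`.
-/

open Polynomial Finset

noncomputable def v (n : ℕ) : ℤ :=
  if n = 0 then -1 else
  ((1 - X) * ∏ j ∈ Finset.range (2 * n - 2),
      (C ((2 * n : ℤ) - 3 - (j : ℤ)) + C (j : ℤ) * X)).coeff (n - 1)

theorem ZMod.prod_range_natCast {M : Type*} [CommMonoid M] (n : ℕ) [NeZero n]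
    (f : ZMod n → M) : ∏ j ∈ range n, f j = ∏ a, f a := by
  refine prod_bij' (fun j _ => (j : ZMod n)) (fun a _ => a.val) ?_ ?_ ?_ ?_ ?_ <;>
    simp +contextual [ZMod.val_lt, Nat.mod_eq_of_lt]

theorem ZMod.prod_range_mul_natCast {M : Type*} [CommMonoid M] (n k : ℕ) [NeZero n]
    (f : ZMod n → M) : ∏ j ∈ range (k * n), f j = (∏ a, f a) ^ k := by
  induction k with
  | zero => simp
  | succ k ih =>
    rw [Nat.succ_mul, prod_range_add, ih, pow_succ, ← ZMod.prod_range_natCast]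
    simp

theorem Fintype.prod_eq_apply_zero_mul_prod_units {G₀ M : Type*} [GroupWithZero G₀] [Fintype G₀]
    [DecidableEq G₀] [CommMonoid M] (f : G₀ → M) : ∏ a, f a = f 0 * ∏ u : G₀ˣ, f u := by
  rw [Fintype.prod_eq_mul_prod_compl 0]
  congr 1
  symm
  exact prod_bij (fun u _ => (u : G₀)) (by simp) (fun _ _ _ _ => Units.ext)
    (fun a ha => ⟨Units.mk0 a (by simpa using ha), by simp⟩) (fun _ _ => rfl)

namespace FiniteField

variable {K : Type*} [Field K] [Fintype K] [DecidableEq K]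

theorem prod_units_X_sub_C : ∏ u : Kˣ, (X - C (u : K)) = X ^ (Fintype.card K - 1) - 1 := by
  classical
  simpa [Lagrange.nodal, Fintype.card_units] using
    Lagrange.nodal_subgroup_eq_X_pow_card_sub_one (⊤ : Subgroup Kˣ)

theorem prod_one_add_C_mul_X : ∏ a : K, (1 + C a * X) = 1 - X ^ (Fintype.card K - 1) := by
  have h_factor (u : Kˣ) : 1 + C (u : K) * X = C (u : K) * (X - C ((-u⁻¹ : Kˣ) : K)) := by
    rw [Units.val_neg, map_neg, sub_neg_eq_add, mul_add, ← C_mul, Units.mul_inv, C_1, add_comm]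
  have h_reindex : ∏ u : Kˣ, (X - C ((-u⁻¹ : Kˣ) : K)) = ∏ u : Kˣ, (X - C (u : K)) :=
    Fintype.prod_equiv ((Equiv.inv Kˣ).trans (Equiv.neg Kˣ)) _ _ (fun _ => rfl)
  rw [Fintype.prod_eq_apply_zero_mul_prod_units, Fintype.prod_congr _ _ h_factor,
    prod_mul_distrib, h_reindex, prod_units_X_sub_C, ← map_prod, ← Units.coe_prod,
    prod_univ_units_id_eq_neg_one]
  simp

theorem prod_C_add_C_mul (c : K) (Y : K[X]) :
    ∏ a : K, (C c + C a * Y) = C c * (1 - Y ^ (Fintype.card K - 1)) := by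
  rcases eq_or_ne c 0 with rfl | hc
  · simpa using prod_eq_zero (mem_univ 0) (by simp)
  have h_one : ∏ a : K, (1 + C a * Y) = 1 - Y ^ (Fintype.card K - 1) := by
    simpa using congrArg (aeval Y) (prod_one_add_C_mul_X (K := K))
  rw [← Fintype.prod_equiv (Equiv.mulLeft₀ c hc) (fun b => C c * (1 + C b * Y)) _
    (fun b => by rw [Equiv.mulLeft₀_apply, C_mul]; ring), prod_mul_distrib, prod_const, card_univ, ← C_pow,
    pow_card, h_one]

end FiniteField

theorem X_sub_one_pow_pred_eq_geom_sum {R : Type*} [CommRing R] [IsDomain R] (p : ℕ)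
    [Fact p.Prime] [CharP R p] : (X - 1 : R[X]) ^ (p - 1) = ∑ i ∈ range p, X ^ i := by
  refine mul_left_injective₀ (X_sub_C_ne_zero (1 : R)) ?_
  simp only [C_1]
  rw [← pow_succ, Nat.sub_add_cancel (Fact.out : p.Prime).one_le, sub_pow_char, one_pow,
    geom_sum_mul]

theorem coeff_geom_sum {R : Type*} [Semiring R] (n k : ℕ) :
    (∑ i ∈ range n, (X : R[X]) ^ i).coeff k = if k < n then 1 else 0 := by
  simp [finsetSum_coeff, coeff_X_pow]

theorem coeff_geom_sum_sq {R : Type*} [Semiring R] (n : ℕ) :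
    ((∑ i ∈ range n, (X : R[X]) ^ i) ^ 2).coeff n = (n - 1 : ℕ) := by
  rw [pow_two, coeff_mul, Nat.sum_antidiagonal_eq_sum_range_succ_mk]
  simp only [coeff_geom_sum, ite_zero_mul_ite_zero, mul_one, sum_boole]
  rw [show n - 1 = #(Ioo 0 n) by simp]
  congr 2
  ext i
  simp only [mem_filter, mem_range, mem_Ioo]
  omega

theorem coeff_one_sub_X_mul_expand {R : Type*} [CommRing R] {p : ℕ} (hp : 2 ≤ p) (f : R[X])
    (n : ℕ) : ((1 - X) * expand R p f).coeff (p * n) = f.coeff n := by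
  rw [sub_mul, one_mul, coeff_sub, coeff_expand_mul' (by omega)]
  rcases n with _ | n
  · rw [mul_zero, coeff_X_mul_zero, sub_zero]
  have h_not_dvd : ¬ p ∣ p * n + (p - 1) := by
    rw [Nat.dvd_add_right (dvd_mul_right p n)]
    exact Nat.not_dvd_of_pos_of_lt (by omega) (by omega)
  have h_index : p * (n + 1) = p * n + (p - 1) + 1 := by
    rw [Nat.mul_succ]
    omega
  rw [h_index, coeff_X_mul, coeff_expand (by omega), if_neg h_not_dvd, sub_zero]

theorem intCast_v_succ (R : Type*) [CommRing R] (n : ℕ) :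
    (v (n + 1) : R) =
      ((1 - X) * ∏ j ∈ range (2 * n), (C (2 * (n : R) - 1) + C (j : R) * (X - 1))).coeff n := by
  rw [v, if_neg n.succ_ne_zero, ← eq_intCast (Int.castRingHom R), ← coeff_map,
    Nat.add_sub_cancel, show 2 * (n + 1) - 2 = 2 * n by omega]
  simp only [Polynomial.map_mul, Polynomial.map_sub, Polynomial.map_one, Polynomial.map_X,
    Polynomial.map_prod, Polynomial.map_add, Polynomial.map_C]
  refine congrArg (fun q : R[X] => ((1 - X) * q).coeff n) (prod_congr rfl fun j _ => ?_)
  simp only [Nat.cast_succ, map_sub, map_mul, map_add, map_natCast, map_ofNat, map_one]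
  ring

theorem coeff_one_sub_X_mul_prod_pow {p : ℕ} [Fact p.Prime] {c : ZMod p} (hc : c ^ 2 = 1) :
    ((1 - X) * (∏ a : ZMod p, (C c + C a * (X - 1))) ^ (2 * p)).coeff (p ^ 2) = -1 := by
  have hp : p.Prime := Fact.out
  set S : (ZMod p)[X] := ∑ i ∈ range p, X ^ i
  have h_prod :
      (∏ a : ZMod p, (C c + C a * (X - 1))) ^ (2 * p) = expand (ZMod p) p ((1 - S) ^ 2) := by
    rw [FiniteField.prod_C_add_C_mul, ZMod.card, X_sub_one_pow_pred_eq_geom_sum, pow_mul,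
      mul_pow, ← C_pow, hc, C_1, one_mul, ZMod.expand_card]
  have h_coeff : ((1 - S) ^ 2).coeff p = -1 := by
    rw [show (1 - S) ^ 2 = S ^ 2 - 2 * S + 1 by ring, coeff_add, coeff_sub, coeff_ofNat_mul,
      coeff_geom_sum_sq, coeff_geom_sum, if_neg (lt_irrefl p), coeff_one, if_neg hp.ne_zero,
      Nat.cast_sub hp.one_le, ZMod.natCast_self]
    ring
  rw [h_prod, sq p, coeff_one_sub_X_mul_expand hp.two_le, h_coeff]

theorem v_p_sq_add (p : ℕ) (hp : p.Prime) :
    v (p ^ 2 + 1) ≡ -1 [ZMOD (p : ℤ)] ∧ v (p ^ 2 + 2) ≡ -1 [ZMOD (p : ℤ)] := by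
  have := Fact.mk hp
  have h_sq : ((p ^ 2 : ℕ) : ZMod p) = 0 := by simp
  simp only [← ZMod.intCast_eq_intCast_iff, Int.cast_neg, Int.cast_one]
  constructor
  · rw [intCast_v_succ, h_sq, show 2 * p ^ 2 = 2 * p * p by ring,
      ZMod.prod_range_mul_natCast p (2 * p) (fun a => C _ + C a * (X - 1))]
    exact coeff_one_sub_X_mul_prod_pow (by simp)
  · rw [intCast_v_succ, Nat.cast_succ, h_sq, show (2 * (0 + 1) - 1 : ZMod p) = 1 by norm_num,
      show 2 * (p ^ 2 + 1) = 2 * p * p + 2 by ring, prod_range_add,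
      ZMod.prod_range_mul_natCast p (2 * p) (fun a => C _ + C a * (X - 1))]
    have h_tail : ∏ j ∈ range 2, (C (1 : ZMod p) + C ((2 * p * p + j : ℕ) : ZMod p) * (X - 1))
        = X := by
      simp [prod_range_succ]
    rw [h_tail, ← mul_assoc, coeff_mul_X]
    exact coeff_one_sub_X_mul_prod_pow (by simp)
end

section
/- If p is an odd prime, then v_{(p+3)/2 + i} ≡ 0 (mod p) for every integer i with 0 ≤ i ≤ (p-3)/2. -/
open Polynomial Finset

/-! Modulo `p` the `j`-th factor of the product defining `v m` is `c + j (X - 1)` with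
`c = 2m - 3`, so it only depends on `j mod p`. Over `𝔽_p` a full period of factors multiplies to
`c (1 - (X - 1)^(p-1))` (Wilson's theorem fixes the constant), hence `(1 - X)` times it is
`c (X^p - X)`. For `m = (p + 3)/2 + i` there are `p + 2i + 1` factors; the last `2i + 1` of them
start with the constant `c`, so `v m` is the coefficient of `X^(m-1)` in `c (X^p - X) B` with
`deg B ≤ 2i`, which vanishes since `2i + 1 < m - 1 < p`. -/

namespace FiniteField

variable {K : Type*} [Field K] [Fintype K]

theorem prod_univ_X_sub_C : ∏ a : K, (X - C a) = X ^ Fintype.card K - X := by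
  have hmonic : (X ^ Fintype.card K - X : K[X]).Monic :=
    monic_X_pow_sub (by rw [degree_X]; exact_mod_cast Fintype.one_lt_card)
  have h := prod_multiset_X_sub_C_of_monic_of_roots_card_eq hmonic
    (by rw [roots_X_pow_card_sub_X, X_pow_card_sub_X_natDegree_eq K Fintype.one_lt_card]; rfl)
  rwa [roots_X_pow_card_sub_X] at h

theorem prod_erase_zero_X_sub_C [DecidableEq K] :
    ∏ a ∈ univ.erase (0 : K), (X - C a) = X ^ (Fintype.card K - 1) - 1 := by
  refine mul_left_cancel₀ (X_ne_zero (R := K)) ?_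
  have h := mul_prod_erase univ (fun a : K => X - C a) (mem_univ 0)
  rw [C_0, sub_zero] at h
  rw [h, prod_univ_X_sub_C, mul_sub, mul_one, ← pow_succ', Nat.sub_add_cancel Fintype.card_pos]

theorem prod_erase_zero_eq_neg_one [DecidableEq K] : ∏ a ∈ univ.erase (0 : K), a = -1 := by
  have h := congrArg (eval 0) (prod_erase_zero_X_sub_C (K := K))
  simp only [eval_prod, eval_sub, eval_pow, eval_X, eval_C, eval_one, zero_sub,
    zero_pow (Nat.sub_ne_zero_of_lt Fintype.one_lt_card)] at h
  rw [← h]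
  exact prod_nbij' (- ·) (- ·) (by simp) (by simp) (by simp) (by simp) (by simp)

theorem prod_C_add_C_mul_X (c : K) :
    ∏ a : K, (C c + C a * X) = C c * (1 - X ^ (Fintype.card K - 1)) := by
  classical
  rcases eq_or_ne c 0 with rfl | hc
  · simp only [C_0, zero_mul]
    exact prod_eq_zero (mem_univ 0) (by simp)
  have hfactor : ∀ a ∈ univ.erase (0 : K), C c + C a * X = C a * (X - C (-(c / a))) := by
    intro a ha
    rw [mul_sub, ← C_mul, mul_neg, mul_div_cancel₀ c (ne_of_mem_erase ha), C_neg]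
    ring
  have hreindex : ∏ a ∈ univ.erase (0 : K), (X - C (-(c / a))) =
      ∏ b ∈ univ.erase (0 : K), (X - C b) :=
    prod_nbij' (fun a => -(c / a)) (fun b => -(c / b)) (by simp [hc]) (by simp [hc])
      (fun a _ => by rw [div_neg, neg_neg, div_div_cancel₀ hc])
      (fun b _ => by rw [div_neg, neg_neg, div_div_cancel₀ hc]) (fun _ _ => rfl)
  rw [← mul_prod_erase univ _ (mem_univ 0), prod_congr rfl hfactor, prod_mul_distrib,
    hreindex, prod_erase_zero_X_sub_C, ← map_prod, prod_erase_zero_eq_neg_one]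
  simp only [C_0, zero_mul, add_zero, C_neg, C_1]
  ring

theorem one_sub_X_mul_prod_C_add_C_mul_X_sub_one (c : K) :
    (1 - X) * ∏ a : K, (C c + C a * (X - 1)) = C c * (X ^ Fintype.card K - X) := by
  have h := congrArg (fun f : K[X] => f.comp (X - 1)) (prod_C_add_C_mul_X c)
  simp only [Polynomial.prod_comp, add_comp, mul_comp, C_comp, X_comp, sub_comp, one_comp,
    pow_comp] at h
  have hfrob : (X - 1 : K[X]) ^ Fintype.card K = X ^ Fintype.card K - 1 := by
    rw [← expand_card]; simp
  have hsucc : (X - 1 : K[X]) ^ Fintype.card K = (X - 1) * (X - 1) ^ (Fintype.card K - 1) := by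
    rw [← pow_succ', Nat.sub_add_cancel Fintype.card_pos]
  rw [h]
  linear_combination C c * (hfrob - hsucc)

end FiniteField

namespace ZMod

theorem prod_range_natCast_s10 {M : Type*} [CommMonoid M] (n : ℕ) [NeZero n]
    (f : ZMod n → M) : ∏ j ∈ range n, f j = ∏ a, f a :=
  prod_nbij' (fun j => (j : ZMod n)) val (by simp) (by simp [val_lt])
    (fun _ hj => val_cast_of_lt (mem_range.1 hj)) (fun a _ => natCast_zmod_val a)
    (fun _ _ => rfl)

theorem prod_range_add_natCast {M : Type*} [CommMonoid M] (n r : ℕ) [NeZero n]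
    (f : ZMod n → M) : ∏ j ∈ range (n + r), f j = (∏ a, f a) * ∏ j ∈ range r, f j := by
  simp only [prod_range_add, prod_range_natCast_s10, Nat.cast_add, natCast_self, zero_add]

end ZMod

theorem intCast_v {R : Type*} [CommRing R] {n : ℕ} (hn : n ≠ 0) :
    (v n : R) = ((1 - X) * ∏ j ∈ range (2 * n - 2),
      (C ((2 * n - 3 : ℤ) : R) + C (j : R) * (X - 1))).coeff (n - 1) := by
  rw [v, if_neg hn, ← eq_intCast (Int.castRingHom R), ← coeff_map]
  simp only [Polynomial.map_mul, Polynomial.map_sub, Polynomial.map_one, Polynomial.map_X,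
    Polynomial.map_prod, Polynomial.map_add, map_C, Int.coe_castRingHom]
  congr 2
  refine prod_congr rfl fun j _ => ?_
  simp only [Int.cast_sub, Int.cast_natCast, map_sub]
  ring

theorem natDegree_prod_range_succ_C_add_C_mul_X_sub_one_le {R : Type*} [CommRing R] (c : R)
    (r : ℕ) : (∏ j ∈ range (r + 1), (C c + C (j : R) * (X - 1))).natDegree ≤ r := by
  rw [prod_range_succ']
  refine natDegree_mul_le.trans ?_
  simp only [Nat.cast_zero, map_zero, zero_mul, add_zero, natDegree_C]
  refine (natDegree_prod_le _ _).trans ?_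
  refine (sum_le_sum fun j _ => (?_ : _ ≤ 1)).trans ?_
  · compute_degree
  · simp

theorem coeff_one_sub_X_mul_prod_range_eq_zero {p : ℕ} [Fact p.Prime] (c : ZMod p) {r d : ℕ}
    (hrd : r + 1 < d) (hdp : d < p) :
    ((1 - X) * ∏ j ∈ range (p + r + 1), (C c + C (j : ZMod p) * (X - 1))).coeff d = 0 := by
  obtain ⟨e, rfl⟩ : ∃ e, d = e + 1 := ⟨d - 1, by omega⟩
  have hdeg := natDegree_prod_range_succ_C_add_C_mul_X_sub_one_le c r
  rw [add_assoc, ZMod.prod_range_add_natCast (f := fun a => C c + C a * (X - 1)), ← mul_assoc,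
    FiniteField.one_sub_X_mul_prod_C_add_C_mul_X_sub_one, ZMod.card, mul_assoc, coeff_C_mul,
    sub_mul, coeff_sub, coeff_X_pow_mul', if_neg (by omega), coeff_X_mul,
    coeff_eq_zero_of_natDegree_lt (by omega), sub_zero, mul_zero]

theorem v_zero_block_first_col (p i : ℕ) (hp : p.Prime) (hodd : Odd p)
    (hi : i ≤ (p - 3) / 2) :
    v ((p + 3) / 2 + i) ≡ 0 [ZMOD (p : ℤ)] := by
  have := Fact.mk hp
  obtain ⟨k, rfl⟩ := hodd
  have hk := hp.two_le
  rw [show (2 * k + 1 + 3) / 2 + i = k + 2 + i by omega, ← ZMod.intCast_eq_intCast_iff,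
    Int.cast_zero, intCast_v (by omega), show 2 * (k + 2 + i) - 2 = 2 * k + 1 + 2 * i + 1 by omega]
  exact coeff_one_sub_X_mul_prod_range_eq_zero _ (r := 2 * i) (by omega) (by omega)
end
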